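/- For every Motzkin tree X, the number of closed lambda terms in de Bruijn form whose skeleton is X equals the product, taken over all leaves of X, of the number of unary nodes l on the path from the root of X to that leaf. -/

import Mathlib

/-- Motzkin trees (binary-unary trees): leaf `v`, unary `l`, binary `a`. -/
inductive Mot : Type
  | v : Mot
  | l : Mot → Mot
  | a : Mot → Mot → Mot
deriving DecidableEq

/-- Lambda terms in de Bruijn form. -/
inductive Lam : Type
  | v : Nat → Lam
  | l : Lam → Lam
  | a : Lam → Lam → Lam
deriving DecidableEq

/-- `t` is closed at depth `d`. -/
def Lam.closedAt : Lam → Nat → Prop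
  | .v i, d => i < d
  | .l t, d => t.closedAt (d + 1)
  | .a s t, d => s.closedAt d ∧ t.closedAt d

/-- The Motzkin-tree skeleton of a de Bruijn term. -/
def Lam.skel : Lam → Mot
  | .v _ => .v
  | .l t => .l t.skel
  | .a s t => .a s.skel t.skel

/-- For each leaf (in left-to-right order), the number of unary `l` nodes on the
path from the root to that leaf, starting from `d` accumulated binders. -/
def Mot.leafDepths : Mot → Nat → List Nat
  | .v, d => [d]
  | .l t, d => t.leafDepths (d + 1)
  | .a s t, d => s.leafDepths d ++ t.leafDepths d


/-! A term closed at depth `d` with skeleton `X` amounts to an independent choice, at each leaf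
of `X`, of an index below `d` plus the number of binders above that leaf: a leaf offers `Fin d`,
an abstraction passes to its body at depth `d + 1`, and an application splits into a pair. -/

namespace Lam

abbrev WithSkel (X : Mot) (d : ℕ) : Type := {t : Lam // t.closedAt d ∧ t.skel = X}

def withSkelVEquiv (d : ℕ) : WithSkel .v d ≃ Fin d where
  toFun := fun ⟨t, h⟩ => match t, h with
    | .v i, h => ⟨i, h.1⟩
  invFun i := ⟨.v i, i.2, rfl⟩
  left_inv := fun ⟨t, h⟩ => match t, h with
    | .v _, _ => rfl
  right_inv _ := rfl

def withSkelLEquiv (X : Mot) (d : ℕ) : WithSkel (.l X) d ≃ WithSkel X (d + 1) where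
  toFun := fun ⟨t, h⟩ => match t, h with
    | .l t, h => ⟨t, h.1, Mot.l.inj h.2⟩
  invFun := fun ⟨t, h⟩ => ⟨.l t, h.1, congrArg Mot.l h.2⟩
  left_inv := fun ⟨t, h⟩ => match t, h with
    | .l _, _ => rfl
  right_inv _ := rfl

def withSkelAEquiv (X Y : Mot) (d : ℕ) :
    WithSkel (.a X Y) d ≃ WithSkel X d × WithSkel Y d where
  toFun := fun ⟨t, h⟩ => match t, h with
    | .a s t, h => (⟨s, h.1.1, (Mot.a.inj h.2).1⟩, ⟨t, h.1.2, (Mot.a.inj h.2).2⟩)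
  invFun := fun (⟨s, hs⟩, ⟨t, ht⟩) => ⟨.a s t, ⟨hs.1, ht.1⟩, by rw [skel, hs.2, ht.2]⟩
  left_inv := fun ⟨t, h⟩ => match t, h with
    | .a _ _, _ => rfl
  right_inv _ := rfl

theorem card_withSkel (X : Mot) (d : ℕ) :
    Nat.card (WithSkel X d) = (X.leafDepths d).prod := by
  induction X generalizing d with
  | v =>
    rw [Nat.card_congr (withSkelVEquiv d), Nat.card_fin, Mot.leafDepths, List.prod_singleton]
  | l X ih => rw [Nat.card_congr (withSkelLEquiv X d), ih, Mot.leafDepths]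
  | a X Y ihX ihY =>
    rw [Nat.card_congr (withSkelAEquiv X Y d), Nat.card_prod, ihX, ihY, Mot.leafDepths,
      List.prod_append]

end Lam

/-- The number of closed de Bruijn lambda terms with skeleton `X` equals the product,
over all leaves of `X`, of the number of `l` nodes on the root-to-leaf path. -/
theorem stmt2 (X : Mot) :
    Nat.card {t : Lam // t.closedAt 0 ∧ t.skel = X} = (X.leafDepths 0).prod :=
  Lam.card_withSkel X 0
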